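/- arXiv:2207.03186 — 4 statements merged into one kernel-verified Lean document; each statement's English description precedes it below -/
import Mathlib

section
/- For every T ∈ ℝ^{(m·n)×(m·n)} and every positive integer k, the best Kronecker rank-k approximation error of T in Frobenius norm equals the best rank-k approximation error of the rearranged matrix R(T) in Frobenius norm: inf { ‖T − Σ_{j=1}^k A_j ⊗ B_j‖_F : A_j ∈ ℝ^{m×m}, B_j ∈ ℝ^{n×n} } = inf { ‖R(T) − M‖_F : M ∈ ℝ^{m²×n²}, rank(M) ≤ k }. -/
/-! Rearrangement `R` is a coordinate permutation, so it preserves the Frobenius norm, and it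
turns a Kronecker sum `∑ⱼ Aⱼ ⊗ Bⱼ` into the product `U V` of an `m² × k` and a `k × n²` matrix
(with `vec Aⱼ` and `vec Bⱼ` as the `j`-th column of `U` and row of `V`). Matrices of rank at most
`k` are exactly such products, so the two families of errors coincide as sets of reals. -/

open Matrix Kronecker

/-- Spectral norm (ℓ²→ℓ² operator norm) of a real matrix. -/
noncomputable def specNorm {p q : Type*} [Fintype p] [Fintype q] [DecidableEq q]
    (S : Matrix p q ℝ) : ℝ :=
  ‖LinearMap.toContinuousLinearMap (Matrix.toEuclideanLin S)‖

/-- Frobenius norm of a real matrix. -/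
noncomputable def frobNorm {p q : Type*} [Fintype p] [Fintype q] (S : Matrix p q ℝ) : ℝ :=
  Real.sqrt (∑ i, ∑ j, (S i j) ^ 2)


/-- The rearrangement map sending `T ∈ ℝ^{(m·n)×(m·n)}` to `R(T) ∈ ℝ^{m²×n²}`,
`R(T)_{(i,i'),(p,p')} = T_{(i,p),(i',p')}`. -/
def rearrange (m n : ℕ) (T : Matrix (Fin m × Fin n) (Fin m × Fin n) ℝ) :
    Matrix (Fin m × Fin m) (Fin n × Fin n) ℝ :=
  Matrix.of fun ii pp => T (ii.1, pp.1) (ii.2, pp.2)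

namespace Matrix

variable {K α β : Type*} [Field K] [Fintype β]

theorem exists_mul_eq_of_rank_le {k : ℕ} {M : Matrix α β K} (hM : M.rank ≤ k) :
    ∃ (U : Matrix α (Fin k) K) (V : Matrix (Fin k) β K), U * V = M := by
  classical
  -- `M` factors through its column space `W`, which embeds in `Kᵏ` with a linear retraction.
  set W := LinearMap.range M.mulVecLin
  obtain ⟨g, hg⟩ : ∃ g : W →ₗ[K] Fin k → K, Function.Injective g :=
    finrank_le_iff_exists_linearMap.1 (hM.trans_eq (Module.finrank_fin_fun K).symm)
  obtain ⟨h, hh⟩ := g.exists_leftInverse_of_injective (LinearMap.ker_eq_bot.2 hg)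
  refine ⟨LinearMap.toMatrix' (W.subtype ∘ₗ h),
    LinearMap.toMatrix' (g ∘ₗ M.mulVecLin.rangeRestrict), ?_⟩
  rw [← LinearMap.toMatrix'_comp, LinearMap.comp_assoc, ← LinearMap.comp_assoc _ g, hh,
    LinearMap.id_comp, LinearMap.subtype_comp_codRestrict]
  exact LinearMap.toMatrix'_toLin' M

theorem rank_mul_le_card_inner {k : ℕ} (U : Matrix α (Fin k) K) (V : Matrix (Fin k) β K) :
    (U * V).rank ≤ k :=
  (rank_mul_le_left U V).trans ((rank_le_card_width U).trans_eq (Fintype.card_fin k))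

end Matrix

theorem rearrange_sub (m n : ℕ) (X Y : Matrix (Fin m × Fin n) (Fin m × Fin n) ℝ) :
    rearrange m n (X - Y) = rearrange m n X - rearrange m n Y := rfl

theorem frobNorm_rearrange (m n : ℕ) (X : Matrix (Fin m × Fin n) (Fin m × Fin n) ℝ) :
    frobNorm (rearrange m n X) = frobNorm X := by
  unfold frobNorm
  congr 1
  simp only [← Fintype.sum_prod_type']
  exact Fintype.sum_equiv (Equiv.prodProdProdComm (Fin m) (Fin m) (Fin n) (Fin n)) _ _
    fun _ => rfl

theorem rearrange_sum_kronecker {ι : Type*} [Fintype ι] (m n : ℕ)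
    (A : ι → Matrix (Fin m) (Fin m) ℝ) (B : ι → Matrix (Fin n) (Fin n) ℝ) :
    rearrange m n (∑ j, A j ⊗ₖ B j) =
      (of fun ii j => A j ii.1 ii.2) * of fun j pp => B j pp.1 pp.2 := by
  ext ii pp
  simp [rearrange, mul_apply, Matrix.sum_apply]

theorem kroneckerApprox_eq_lowRankApprox_general (m n k : ℕ)
    (T : Matrix (Fin m × Fin n) (Fin m × Fin n) ℝ) :
    sInf {c : ℝ | ∃ (A : Fin k → Matrix (Fin m) (Fin m) ℝ)
        (B : Fin k → Matrix (Fin n) (Fin n) ℝ),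
        c = frobNorm (T - ∑ j, (A j) ⊗ₖ (B j))} =
      sInf {c : ℝ | ∃ M : Matrix (Fin m × Fin m) (Fin n × Fin n) ℝ,
        M.rank ≤ k ∧ c = frobNorm (rearrange m n T - M)} := by
  congr 1
  ext c
  constructor
  · rintro ⟨A, B, rfl⟩
    refine ⟨rearrange m n (∑ j, A j ⊗ₖ B j), ?_, by rw [← rearrange_sub, frobNorm_rearrange]⟩
    rw [rearrange_sum_kronecker]
    exact rank_mul_le_card_inner _ _
  · rintro ⟨_, hM, rfl⟩
    obtain ⟨U, V, rfl⟩ := exists_mul_eq_of_rank_le hM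
    refine ⟨fun j => of fun i i' => U (i, i') j, fun j => of fun p p' => V j (p, p'), ?_⟩
    rw [← frobNorm_rearrange, rearrange_sub, rearrange_sum_kronecker]
    rfl

/-- The best Kronecker rank-`k` approximation error of `T` in Frobenius norm equals
the best rank-`k` approximation error of the rearranged matrix `R(T)` in Frobenius norm. -/
theorem kroneckerApprox_eq_lowRankApprox (m n k : ℕ) (hm : 0 < m) (hn : 0 < n) (hk : 0 < k)
    (T : Matrix (Fin m × Fin n) (Fin m × Fin n) ℝ) :
    sInf {c : ℝ | ∃ (A : Fin k → Matrix (Fin m) (Fin m) ℝ)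
        (B : Fin k → Matrix (Fin n) (Fin n) ℝ),
        c = frobNorm (T - ∑ j, (A j) ⊗ₖ (B j))} =
      sInf {c : ℝ | ∃ M : Matrix (Fin m × Fin m) (Fin n × Fin n) ℝ,
        M.rank ≤ k ∧ c = frobNorm (rearrange m n T - M)} :=
  kroneckerApprox_eq_lowRankApprox_general m n k T
end

section
/- Let a ∈ ℝ^m and b ∈ ℝ^n be unit vectors, let A₁ ∈ ℝ^{m×m} and B₁ ∈ ℝ^{n×n} satisfy A₁ a = 0 and B₁ b = 0, let σ₁ ∈ ℝ, and set T = σ₁ (A₁ ⊗ B₁) + (a aᵀ) ⊗ (b bᵀ). Then the infimum over α ∈ ℝ of ‖T − α σ₁ (A₁ ⊗ B₁)‖₂ equals 1, and it is attained at α = 1. -/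
open Matrix Kronecker

/-!
Writing `v = a ⊗ b`, the hypothesis on `T` gives
`T - α σ₁ (A₁ ⊗ B₁) = (1 - α) σ₁ (A₁ ⊗ B₁) + v vᵀ`, where `v` is a unit vector killed by
`A₁ ⊗ B₁`. Hence `v` is a fixed vector of every such matrix, so each has spectral norm at
least `1`; at `α = 1` only `v vᵀ` is left, whose spectral norm is `‖v‖² = 1`.
-/

open scoped Matrix.Norms.L2Operator

namespace Matrix

section KroneckerVec

variable {R m n : Type*} [CommSemiring R]

def kroneckerVec (a : m → R) (b : n → R) : m × n → R := fun ip => a ip.1 * b ip.2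

@[simp]
theorem kroneckerVec_apply (a : m → R) (b : n → R) (i : m) (p : n) :
    kroneckerVec a b (i, p) = a i * b p := rfl

@[simp]
theorem kroneckerVec_zero_left (b : n → R) : kroneckerVec (0 : m → R) b = 0 := by
  ext ⟨i, p⟩; simp

theorem kroneckerVec_dotProduct_kroneckerVec [Fintype m] [Fintype n] (a c : m → R)
    (b d : n → R) :
    kroneckerVec a b ⬝ᵥ kroneckerVec c d = (a ⬝ᵥ c) * (b ⬝ᵥ d) := by
  simp only [dotProduct, Fintype.sum_prod_type, kroneckerVec_apply, Finset.sum_mul_sum]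
  exact Finset.sum_congr rfl fun _ _ => Finset.sum_congr rfl fun _ _ => by ring

theorem kronecker_mulVec_kroneckerVec [Fintype m] [Fintype n] (A : Matrix m m R)
    (B : Matrix n n R) (a : m → R) (b : n → R) :
    (A ⊗ₖ B) *ᵥ kroneckerVec a b = kroneckerVec (A *ᵥ a) (B *ᵥ b) := by
  ext ⟨i, p⟩
  exact kroneckerVec_dotProduct_kroneckerVec (A i) a (B p) b

theorem vecMulVec_kronecker_vecMulVec (a c : m → R) (b d : n → R) :
    vecMulVec a c ⊗ₖ vecMulVec b d = vecMulVec (kroneckerVec a b) (kroneckerVec c d) := by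
  ext ⟨i, p⟩ ⟨i', p'⟩
  simp only [kroneckerMap_apply, vecMulVec_apply, kroneckerVec_apply]
  ring

end KroneckerVec

section L2OpNorm

variable {ι : Type*} [Fintype ι] [DecidableEq ι]

theorem specNorm_eq_l2_opNorm (S : Matrix ι ι ℝ) : specNorm S = ‖S‖ := rfl

theorem l2_opNorm_mul_conjTranspose_self {𝕜 m n : Type*} [RCLike 𝕜] [Fintype m] [Fintype n]
    [DecidableEq m] [DecidableEq n] (A : Matrix m n 𝕜) : ‖A * Aᴴ‖ = ‖Aᴴ * A‖ := by
  have h := l2_opNorm_conjTranspose_mul_self Aᴴ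
  rw [conjTranspose_conjTranspose] at h
  rw [h, l2_opNorm_conjTranspose, l2_opNorm_conjTranspose_mul_self]

theorem l2_opNorm_vecMulVec_self (v : ι → ℝ) : ‖vecMulVec v v‖ = v ⬝ᵥ v := by
  have h : replicateRow Unit v = (replicateCol Unit v)ᴴ := by simp
  rw [vecMulVec_eq Unit, h, l2_opNorm_mul_conjTranspose_self, conjTranspose_replicateCol,
    replicateRow_mul_replicateCol, star_trivial]
  have hdiag : (of fun _ _ => v ⬝ᵥ v : Matrix Unit Unit ℝ) = diagonal fun _ => v ⬝ᵥ v := by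
    ext; simp
  rw [hdiag, l2_opNorm_diagonal, pi_norm_const, Real.norm_of_nonneg]
  simpa using dotProduct_star_self_nonneg v

theorem one_le_l2_opNorm_of_mulVec_eq_self (S : Matrix ι ι ℝ) {v : ι → ℝ} (hv : v ≠ 0)
    (hS : S *ᵥ v = v) : 1 ≤ ‖S‖ := by
  have h := l2_opNorm_mulVec S (WithLp.toLp 2 v)
  have hpos : 0 < ‖WithLp.toLp 2 v‖ := by simpa using hv
  simp only [hS] at h
  exact one_le_of_le_mul_right₀ hpos h

end L2OpNorm

end Matrix

theorem svd_solution_inf_error_eq_one_general (m n : ℕ)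
    (a : Fin m → ℝ) (b : Fin n → ℝ)
    (ha : Real.sqrt (∑ i, a i ^ 2) = 1) (hb : Real.sqrt (∑ p, b p ^ 2) = 1)
    (A₁ : Matrix (Fin m) (Fin m) ℝ) (B₁ : Matrix (Fin n) (Fin n) ℝ)
    (hA : A₁ *ᵥ a = 0) (σ₁ : ℝ)
    (T : Matrix (Fin m × Fin n) (Fin m × Fin n) ℝ)
    (hT : T = σ₁ • (A₁ ⊗ₖ B₁) + (Matrix.vecMulVec a a) ⊗ₖ (Matrix.vecMulVec b b)) :
    sInf {c : ℝ | ∃ α : ℝ, c = specNorm (T - (α * σ₁) • (A₁ ⊗ₖ B₁))} = 1 ∧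
      specNorm (T - ((1 : ℝ) * σ₁) • (A₁ ⊗ₖ B₁)) = 1 := by
  set v := kroneckerVec a b
  have hv : v ⬝ᵥ v = 1 := by
    have ha' : a ⬝ᵥ a = 1 := by simpa [dotProduct, sq] using Real.sqrt_eq_one.mp ha
    have hb' : b ⬝ᵥ b = 1 := by simpa [dotProduct, sq] using Real.sqrt_eq_one.mp hb
    rw [kroneckerVec_dotProduct_kroneckerVec, ha', hb', mul_one]
  have hKv : (A₁ ⊗ₖ B₁) *ᵥ v = 0 := by
    rw [kronecker_mulVec_kroneckerVec, hA, kroneckerVec_zero_left]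
  have hsplit (α : ℝ) :
      T - (α * σ₁) • (A₁ ⊗ₖ B₁) = ((1 - α) * σ₁) • (A₁ ⊗ₖ B₁) + vecMulVec v v := by
    rw [hT, vecMulVec_kronecker_vecMulVec]
    module
  have hge (α : ℝ) : 1 ≤ specNorm (T - (α * σ₁) • (A₁ ⊗ₖ B₁)) := by
    rw [specNorm_eq_l2_opNorm]
    refine one_le_l2_opNorm_of_mulVec_eq_self _ (v := v) (fun h => by simp [h] at hv) ?_
    rw [hsplit, add_mulVec, smul_mulVec, hKv, vecMulVec_mulVec, hv]
    simp
  have hone : specNorm (T - ((1 : ℝ) * σ₁) • (A₁ ⊗ₖ B₁)) = 1 := by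
    rw [hsplit, sub_self, zero_mul, zero_smul, zero_add, specNorm_eq_l2_opNorm,
      l2_opNorm_vecMulVec_self, hv]
  refine ⟨IsLeast.csInf_eq ⟨⟨1, hone.symm⟩, ?_⟩, hone⟩
  rintro c ⟨α, rfl⟩
  exact hge α

/-- For unit vectors `a`, `b` with `A₁ a = 0`, `B₁ b = 0` and
`T = σ₁ (A₁ ⊗ B₁) + (a aᵀ) ⊗ (b bᵀ)`, the infimum over `α ∈ ℝ` of
`‖T − α σ₁ (A₁ ⊗ B₁)‖₂` equals `1`, and it is attained at `α = 1`. -/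
theorem svd_solution_inf_error_eq_one (m n : ℕ) (hm : 0 < m) (hn : 0 < n)
    (a : Fin m → ℝ) (b : Fin n → ℝ)
    (ha : Real.sqrt (∑ i, a i ^ 2) = 1) (hb : Real.sqrt (∑ p, b p ^ 2) = 1)
    (A₁ : Matrix (Fin m) (Fin m) ℝ) (B₁ : Matrix (Fin n) (Fin n) ℝ)
    (hA : A₁ *ᵥ a = 0) (hB : B₁ *ᵥ b = 0) (σ₁ : ℝ)
    (T : Matrix (Fin m × Fin n) (Fin m × Fin n) ℝ)
    (hT : T = σ₁ • (A₁ ⊗ₖ B₁) + (Matrix.vecMulVec a a) ⊗ₖ (Matrix.vecMulVec b b)) :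
    sInf {c : ℝ | ∃ α : ℝ, c = specNorm (T - (α * σ₁) • (A₁ ⊗ₖ B₁))} = 1 ∧
      specNorm (T - ((1 : ℝ) * σ₁) • (A₁ ⊗ₖ B₁)) = 1 :=
  svd_solution_inf_error_eq_one_general m n a b ha hb A₁ B₁ hA σ₁ T hT
end

section
/- Assume λ > 0 and μ > 0, and let (A^(ℓ), B^(ℓ)) be an alternating minimization sequence for F_{λ,μ}. Then the sequence (A^(ℓ), B^(ℓ)) is bounded and possesses at least one accumulation point, i.e., there exist (A*, B*) and a strictly increasing function φ : ℕ → ℕ such that (A^(φ(ℓ)), B^(φ(ℓ))) converges to (A*, B*). -/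
open Matrix Kronecker

/-- The regularized cost function
`F_{λ,μ}(A,B) = ‖T − ∑ⱼ Aⱼ ⊗ Bⱼ‖₂ + λ ∑ⱼ ‖Aⱼ‖_F² + μ ∑ⱼ ‖Bⱼ‖_F²`. -/
noncomputable def F (m n k : ℕ) (T : Matrix (Fin m × Fin n) (Fin m × Fin n) ℝ)
    (lam mu : ℝ) (A : Fin k → Matrix (Fin m) (Fin m) ℝ)
    (B : Fin k → Matrix (Fin n) (Fin n) ℝ) : ℝ :=
  specNorm (T - ∑ j, (A j) ⊗ₖ (B j)) + lam * ∑ j, frobNorm (A j) ^ 2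
    + mu * ∑ j, frobNorm (B j) ^ 2

/-!
Each half-step of alternating minimization can only lower the cost, so `ℓ ↦ F(A^ℓ, B^ℓ)` is
nonincreasing and bounded by `F(A^0, B^0)`. As the misfit term is nonnegative,
`min(λ, μ) (∑ⱼ ‖A_j‖_F² + ∑ⱼ ‖B_j‖_F²) ≤ F(A, B)`, so for `λ, μ > 0` the iterates stay in
a ball of a finite-dimensional space, and Bolzano–Weierstrass yields a convergent subsequence.
-/

def IsAlternatingMinSeq {α β γ : Type*} [Preorder γ] (f : α → β → γ) (a : ℕ → α)
    (b : ℕ → β) : Prop :=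
  (∀ ℓ a', f (a (ℓ + 1)) (b ℓ) ≤ f a' (b ℓ)) ∧
    ∀ ℓ b', f (a (ℓ + 1)) (b (ℓ + 1)) ≤ f (a (ℓ + 1)) b'

theorem IsAlternatingMinSeq.antitone {α β γ : Type*} [Preorder γ] {f : α → β → γ}
    {a : ℕ → α} {b : ℕ → β} (h : IsAlternatingMinSeq f a b) :
    Antitone fun ℓ ↦ f (a ℓ) (b ℓ) :=
  antitone_nat_of_succ_le fun ℓ ↦ (h.2 ℓ (b ℓ)).trans (h.1 ℓ (a ℓ))

theorem min_mul_sum_frobNorm_sq_le_F (m n k : ℕ) (T : Matrix (Fin m × Fin n) (Fin m × Fin n) ℝ)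
    (lam mu : ℝ) (A : Fin k → Matrix (Fin m) (Fin m) ℝ)
    (B : Fin k → Matrix (Fin n) (Fin n) ℝ) :
    min lam mu * (∑ j, frobNorm (A j) ^ 2 + ∑ j, frobNorm (B j) ^ 2) ≤ F m n k T lam mu A B := by
  have hA : 0 ≤ ∑ j, frobNorm (A j) ^ 2 := by positivity
  have hB : 0 ≤ ∑ j, frobNorm (B j) ^ 2 := by positivity
  have hspec : 0 ≤ specNorm (T - ∑ j, A j ⊗ₖ B j) := norm_nonneg _
  rw [F, mul_add]
  linarith [mul_le_mul_of_nonneg_right (min_le_left lam mu) hA,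
    mul_le_mul_of_nonneg_right (min_le_right lam mu) hB]

section Frobenius

attribute [local instance] Matrix.frobeniusNormedAddCommGroup Matrix.frobeniusNormedSpace

theorem frobNorm_eq_norm {p q : Type*} [Fintype p] [Fintype q] (S : Matrix p q ℝ) :
    frobNorm S = ‖S‖ := by
  simp [frobNorm, frobenius_norm_def, Real.sqrt_eq_rpow]

theorem norm_le_sqrt_of_sum_norm_sq_le {ι E : Type*} [Fintype ι] [SeminormedAddCommGroup E]
    {x : ι → E} {C : ℝ} (h : ∑ j, ‖x j‖ ^ 2 ≤ C) : ‖x‖ ≤ √C :=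
  pi_norm_le_iff_of_nonneg (Real.sqrt_nonneg C) |>.2 fun j ↦ Real.le_sqrt_of_sq_le <|
    (Finset.single_le_sum (fun i _ ↦ sq_nonneg ‖x i‖) (Finset.mem_univ j)).trans h

theorem exists_tendsto_subseq_of_sum_frobNorm_sq_le {ι p p' q q' : Type*} [Fintype ι]
    [Fintype p] [Fintype p'] [Fintype q] [Fintype q'] {A : ℕ → ι → Matrix p p' ℝ}
    {B : ℕ → ι → Matrix q q' ℝ} {C : ℝ}
    (hC : ∀ ℓ, ∑ j, frobNorm (A ℓ j) ^ 2 + ∑ j, frobNorm (B ℓ j) ^ 2 ≤ C) :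
    ∃ (Astar : ι → Matrix p p' ℝ) (Bstar : ι → Matrix q q' ℝ) (φ : ℕ → ℕ), StrictMono φ ∧
      Filter.Tendsto (fun ℓ ↦ (A (φ ℓ), B (φ ℓ))) Filter.atTop (nhds (Astar, Bstar)) := by
  simp only [frobNorm_eq_norm] at hC
  have hbdd : ∀ ℓ, (A ℓ, B ℓ) ∈ Metric.closedBall 0 √C := by
    intro ℓ
    have hA : 0 ≤ ∑ j, ‖A ℓ j‖ ^ 2 := by positivity
    have hB : 0 ≤ ∑ j, ‖B ℓ j‖ ^ 2 := by positivity
    rw [mem_closedBall_zero_iff, Prod.norm_def, max_le_iff]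
    exact ⟨norm_le_sqrt_of_sum_norm_sq_le (by linarith [hC ℓ]),
      norm_le_sqrt_of_sum_norm_sq_le (by linarith [hC ℓ])⟩
  obtain ⟨⟨Astar, Bstar⟩, -, φ, hφ, hlim⟩ :=
    tendsto_subseq_of_bounded Metric.isBounded_closedBall hbdd
  exact ⟨Astar, Bstar, φ, hφ, hlim⟩

end Frobenius

theorem alternating_sequence_bounded_and_has_accumulation_point_general
    (m n k : ℕ)
    (T : Matrix (Fin m × Fin n) (Fin m × Fin n) ℝ)
    (lam mu : ℝ) (hlam : 0 < lam) (hmu : 0 < mu)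
    (A : ℕ → Fin k → Matrix (Fin m) (Fin m) ℝ)
    (B : ℕ → Fin k → Matrix (Fin n) (Fin n) ℝ)
    (hA : ∀ ℓ, ∀ A' : Fin k → Matrix (Fin m) (Fin m) ℝ,
      F m n k T lam mu (A (ℓ + 1)) (B ℓ) ≤ F m n k T lam mu A' (B ℓ))
    (hB : ∀ ℓ, ∀ B' : Fin k → Matrix (Fin n) (Fin n) ℝ,
      F m n k T lam mu (A (ℓ + 1)) (B (ℓ + 1)) ≤ F m n k T lam mu (A (ℓ + 1)) B') :
    (∃ C : ℝ, ∀ ℓ, (∑ j, frobNorm (A ℓ j) ^ 2) + (∑ j, frobNorm (B ℓ j) ^ 2) ≤ C) ∧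
    (∃ (Astar : Fin k → Matrix (Fin m) (Fin m) ℝ)
       (Bstar : Fin k → Matrix (Fin n) (Fin n) ℝ) (φ : ℕ → ℕ), StrictMono φ ∧
       Filter.Tendsto (fun ℓ => (A (φ ℓ), B (φ ℓ))) Filter.atTop (nhds (Astar, Bstar))) := by
  have hdecr := IsAlternatingMinSeq.antitone (f := F m n k T lam mu) ⟨hA, hB⟩
  have hbound : ∀ ℓ, (∑ j, frobNorm (A ℓ j) ^ 2) + (∑ j, frobNorm (B ℓ j) ^ 2) ≤
      F m n k T lam mu (A 0) (B 0) / min lam mu := fun ℓ ↦ by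
    rw [le_div_iff₀' (lt_min hlam hmu)]
    exact (min_mul_sum_frobNorm_sq_le_F m n k T lam mu _ _).trans (hdecr (Nat.zero_le ℓ))
  exact ⟨⟨_, hbound⟩, exists_tendsto_subseq_of_sum_frobNorm_sq_le hbound⟩

/-- For `λ, μ > 0`, any alternating minimization sequence for `F_{λ,μ}` is bounded
and possesses at least one accumulation point. -/
theorem alternating_sequence_bounded_and_has_accumulation_point
    (m n k : ℕ) (hm : 0 < m) (hn : 0 < n) (hk : 0 < k)
    (T : Matrix (Fin m × Fin n) (Fin m × Fin n) ℝ)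
    (lam mu : ℝ) (hlam : 0 < lam) (hmu : 0 < mu)
    (A : ℕ → Fin k → Matrix (Fin m) (Fin m) ℝ)
    (B : ℕ → Fin k → Matrix (Fin n) (Fin n) ℝ)
    (hA : ∀ ℓ, ∀ A' : Fin k → Matrix (Fin m) (Fin m) ℝ,
      F m n k T lam mu (A (ℓ + 1)) (B ℓ) ≤ F m n k T lam mu A' (B ℓ))
    (hB : ∀ ℓ, ∀ B' : Fin k → Matrix (Fin n) (Fin n) ℝ,
      F m n k T lam mu (A (ℓ + 1)) (B (ℓ + 1)) ≤ F m n k T lam mu (A (ℓ + 1)) B') :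
    (∃ C : ℝ, ∀ ℓ, (∑ j, frobNorm (A ℓ j) ^ 2) + (∑ j, frobNorm (B ℓ j) ^ 2) ≤ C) ∧
    (∃ (Astar : Fin k → Matrix (Fin m) (Fin m) ℝ)
       (Bstar : Fin k → Matrix (Fin n) (Fin n) ℝ) (φ : ℕ → ℕ), StrictMono φ ∧
       Filter.Tendsto (fun ℓ => (A (φ ℓ), B (φ ℓ))) Filter.atTop (nhds (Astar, Bstar))) :=
  alternating_sequence_bounded_and_has_accumulation_point_general m n k T lam mu hlam hmu A B hA hB
end

section
/- Assume λ > 0 and μ > 0, and let (A^(ℓ), B^(ℓ)) be an alternating minimization sequence for F_{λ,μ}. Then every accumulation point (A*, B*) of the sequence (A^(ℓ), B^(ℓ)) is a partial optimum of F_{λ,μ}: F_{λ,μ}(A*,B*) ≤ F_{λ,μ}(A,B*) for all A ∈ (ℝ^{m×m})^k and F_{λ,μ}(A*,B*) ≤ F_{λ,μ}(A*,B) for all B ∈ (ℝ^{n×n})^k. -/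
open Matrix Kronecker

/-!
Along an alternating minimization sequence the values `F(Aˡ, Bˡ)` decrease, since each half-step
can only lower `F`. By continuity of `F` the subsequence of values tends to `F(A*, B*)`, so that
limit is a lower bound for all values, including the intermediate values `F(Aˡ⁺¹, Bˡ)`. Each
half-step minimality inequality then passes to the limit along the subsequence.
-/

open Filter Topology Function

def IsPartialOptimum {X Y α : Type*} [Preorder α] (f : X → Y → α) (x₀ : X) (y₀ : Y) : Prop :=
  (∀ x, f x₀ y₀ ≤ f x y₀) ∧ ∀ y, f x₀ y₀ ≤ f x₀ y

section AlternatingMinimization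

variable {X Y α : Type*} [Preorder α] {f : X → Y → α} {a : ℕ → X} {b : ℕ → Y}

theorem antitone_of_alternating_minimization
    (ha : ∀ ℓ x, f (a (ℓ + 1)) (b ℓ) ≤ f x (b ℓ))
    (hb : ∀ ℓ y, f (a (ℓ + 1)) (b (ℓ + 1)) ≤ f (a (ℓ + 1)) y) :
    Antitone fun ℓ => f (a ℓ) (b ℓ) :=
  antitone_nat_of_succ_le fun ℓ => (hb ℓ (b ℓ)).trans (ha ℓ (a ℓ))

variable [TopologicalSpace α] [OrderClosedTopology α]

theorem Antitone.le_of_tendsto_comp {c : ℕ → α} (hc : Antitone c) {φ : ℕ → ℕ}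
    (hφ : StrictMono φ) {L : α} (hlim : Tendsto (c ∘ φ) atTop (𝓝 L)) (ℓ : ℕ) : L ≤ c ℓ :=
  ((hc.comp_monotone hφ.monotone).le_of_tendsto hlim ℓ).trans (hc hφ.le_apply)

variable [TopologicalSpace X] [TopologicalSpace Y]

theorem isPartialOptimum_of_alternating_minimization (hf : Continuous (uncurry f))
    (ha : ∀ ℓ x, f (a (ℓ + 1)) (b ℓ) ≤ f x (b ℓ))
    (hb : ∀ ℓ y, f (a (ℓ + 1)) (b (ℓ + 1)) ≤ f (a (ℓ + 1)) y)
    {φ : ℕ → ℕ} (hφ : StrictMono φ) {x₀ : X} {y₀ : Y}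
    (hlim : Tendsto (fun ℓ => (a (φ ℓ), b (φ ℓ))) atTop (𝓝 (x₀, y₀))) :
    IsPartialOptimum f x₀ y₀ := by
  have hvalues : Tendsto (fun ℓ => f (a (φ ℓ)) (b (φ ℓ))) atTop (𝓝 (f x₀ y₀)) :=
    (hf.tendsto (x₀, y₀)).comp hlim
  have hlower : ∀ ℓ, f x₀ y₀ ≤ f (a ℓ) (b ℓ) :=
    (antitone_of_alternating_minimization ha hb).le_of_tendsto_comp hφ hvalues
  have ha_lim : Tendsto (fun ℓ => a (φ ℓ)) atTop (𝓝 x₀) := (continuous_fst.tendsto _).comp hlim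
  have hb_lim : Tendsto (fun ℓ => b (φ ℓ)) atTop (𝓝 y₀) := (continuous_snd.tendsto _).comp hlim
  constructor
  · intro x
    refine ge_of_tendsto ((hf.tendsto (x, y₀)).comp (tendsto_const_nhds.prodMk_nhds hb_lim))
      (Eventually.of_forall fun ℓ => ?_)
    exact (hlower (φ ℓ + 1)).trans ((hb (φ ℓ) (b (φ ℓ))).trans (ha (φ ℓ) x))
  · intro y
    refine le_of_tendsto_of_tendsto hvalues
      ((hf.tendsto (x₀, y)).comp (ha_lim.prodMk_nhds tendsto_const_nhds)) ?_
    filter_upwards [eventually_ge_atTop 1] with ℓ hℓ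
    obtain ⟨i, hi⟩ : ∃ i, φ ℓ = i + 1 := Nat.exists_eq_add_of_le' (hℓ.trans hφ.le_apply)
    show f (a (φ ℓ)) (b (φ ℓ)) ≤ f (a (φ ℓ)) y
    rw [hi]
    exact hb i y

end AlternatingMinimization

@[fun_prop]
theorem Continuous.matrix_kronecker {X R l m n p : Type*} [TopologicalSpace X]
    [TopologicalSpace R] [Mul R] [ContinuousMul R]
    {A : X → Matrix l m R} {B : X → Matrix n p R} (hA : Continuous A) (hB : Continuous B) :
    Continuous fun x => A x ⊗ₖ B x :=
  continuous_matrix fun i j => (hA.matrix_elem i.1 j.1).mul (hB.matrix_elem i.2 j.2)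

@[fun_prop]
theorem continuous_specNorm {p q : Type*} [Fintype p] [Fintype q] [DecidableEq q] :
    Continuous (specNorm : Matrix p q ℝ → ℝ) :=
  continuous_norm.comp (LinearMap.continuous_of_finiteDimensional
    ((LinearMap.toContinuousLinearMap : (EuclideanSpace ℝ q →ₗ[ℝ] EuclideanSpace ℝ p) ≃ₗ[ℝ] _)
      |>.toLinearMap.comp (Matrix.toEuclideanLin : Matrix p q ℝ ≃ₗ[ℝ] _).toLinearMap))

@[fun_prop]
theorem continuous_frobNorm {p q : Type*} [Fintype p] [Fintype q] :
    Continuous (frobNorm : Matrix p q ℝ → ℝ) := by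
  unfold frobNorm
  fun_prop

theorem continuous_uncurry_F (m n k : ℕ) (T : Matrix (Fin m × Fin n) (Fin m × Fin n) ℝ)
    (lam mu : ℝ) : Continuous (uncurry (F m n k T lam mu)) := by
  unfold F
  fun_prop

theorem accumulation_point_is_partial_optimum_general
    (m n k : ℕ)
    (T : Matrix (Fin m × Fin n) (Fin m × Fin n) ℝ)
    (lam mu : ℝ)
    (A : ℕ → Fin k → Matrix (Fin m) (Fin m) ℝ)
    (B : ℕ → Fin k → Matrix (Fin n) (Fin n) ℝ)
    (hA : ∀ ℓ, ∀ A' : Fin k → Matrix (Fin m) (Fin m) ℝ,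
      F m n k T lam mu (A (ℓ + 1)) (B ℓ) ≤ F m n k T lam mu A' (B ℓ))
    (hB : ∀ ℓ, ∀ B' : Fin k → Matrix (Fin n) (Fin n) ℝ,
      F m n k T lam mu (A (ℓ + 1)) (B (ℓ + 1)) ≤ F m n k T lam mu (A (ℓ + 1)) B')
    (Astar : Fin k → Matrix (Fin m) (Fin m) ℝ)
    (Bstar : Fin k → Matrix (Fin n) (Fin n) ℝ)
    (φ : ℕ → ℕ) (hφ : StrictMono φ)
    (hlim : Filter.Tendsto (fun ℓ => (A (φ ℓ), B (φ ℓ))) Filter.atTop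
      (nhds (Astar, Bstar))) :
    (∀ A' : Fin k → Matrix (Fin m) (Fin m) ℝ,
      F m n k T lam mu Astar Bstar ≤ F m n k T lam mu A' Bstar) ∧
    (∀ B' : Fin k → Matrix (Fin n) (Fin n) ℝ,
      F m n k T lam mu Astar Bstar ≤ F m n k T lam mu Astar B') :=
  isPartialOptimum_of_alternating_minimization (continuous_uncurry_F m n k T lam mu) hA hB hφ hlim

/-- For `λ, μ > 0`, every accumulation point of an alternating minimization
sequence for `F_{λ,μ}` is a partial optimum of `F_{λ,μ}`. -/
theorem accumulation_point_is_partial_optimum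
    (m n k : ℕ) (hm : 0 < m) (hn : 0 < n) (hk : 0 < k)
    (T : Matrix (Fin m × Fin n) (Fin m × Fin n) ℝ)
    (lam mu : ℝ) (hlam : 0 < lam) (hmu : 0 < mu)
    (A : ℕ → Fin k → Matrix (Fin m) (Fin m) ℝ)
    (B : ℕ → Fin k → Matrix (Fin n) (Fin n) ℝ)
    (hA : ∀ ℓ, ∀ A' : Fin k → Matrix (Fin m) (Fin m) ℝ,
      F m n k T lam mu (A (ℓ + 1)) (B ℓ) ≤ F m n k T lam mu A' (B ℓ))
    (hB : ∀ ℓ, ∀ B' : Fin k → Matrix (Fin n) (Fin n) ℝ,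
      F m n k T lam mu (A (ℓ + 1)) (B (ℓ + 1)) ≤ F m n k T lam mu (A (ℓ + 1)) B')
    (Astar : Fin k → Matrix (Fin m) (Fin m) ℝ)
    (Bstar : Fin k → Matrix (Fin n) (Fin n) ℝ)
    (φ : ℕ → ℕ) (hφ : StrictMono φ)
    (hlim : Filter.Tendsto (fun ℓ => (A (φ ℓ), B (φ ℓ))) Filter.atTop
      (nhds (Astar, Bstar))) :
    (∀ A' : Fin k → Matrix (Fin m) (Fin m) ℝ,
      F m n k T lam mu Astar Bstar ≤ F m n k T lam mu A' Bstar) ∧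
    (∀ B' : Fin k → Matrix (Fin n) (Fin n) ℝ,
      F m n k T lam mu Astar Bstar ≤ F m n k T lam mu Astar B') :=
  accumulation_point_is_partial_optimum_general m n k T lam mu A B hA hB Astar Bstar φ hφ hlim
end
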